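/- arXiv:1310.4976 — 2 statements merged into one kernel-verified Lean document; each statement's English description precedes it below -/
import Mathlib

section
/- For every integer d ≥ 1, the map Ψ' : ℂ³ → ℂ⁴ given by Ψ'(t',y,v) = (t'²y − t'·v^d, y, t'·y − v^d, v) satisfies the following: (1) for all (t',y,v) ∈ ℂ³ the point Ψ'(t',y,v) lies in Y_d, i.e. g_d(Ψ'(t',y,v)) = 0; (2) Ψ' is injective on the set {(t',y,v) ∈ ℂ³ : (y,v) ≠ (0,0)}; (3) for (y,v) ≠ (0,0) the point Ψ'(t',y,v) is nonzero. -/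
/-!
The point `Ψ'(t', y, v) = (x, y, z, v)` satisfies `t' * y = z + v ^ d` and `x = t' * z`, which gives
the equation of `Y_d` at once and recovers `t'` from the image: from the first relation when
`y ≠ 0`, and from the second when `y = 0`, since then `v ≠ 0` and `z = -v ^ d ≠ 0`.
-/

namespace LinksOfSingularities

variable {R : Type*} [CommRing R]

def g (d : ℕ) (p : R × R × R × R) : R :=
  p.1 * p.2.1 - p.2.2.1 * (p.2.2.1 + p.2.2.2 ^ d)

def secondChart (d : ℕ) (q : R × R × R) : R × R × R × R :=
  (q.1 ^ 2 * q.2.1 - q.1 * q.2.2 ^ d, q.2.1, q.1 * q.2.1 - q.2.2 ^ d, q.2.2)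

theorem secondChart_mul_snd (d : ℕ) (q : R × R × R) :
    q.1 * (secondChart d q).2.1 = (secondChart d q).2.2.1 + (secondChart d q).2.2.2 ^ d := by
  simp only [secondChart]
  ring

theorem secondChart_fst (d : ℕ) (q : R × R × R) :
    (secondChart d q).1 = q.1 * (secondChart d q).2.2.1 := by
  simp only [secondChart]
  ring

theorem g_secondChart (d : ℕ) (q : R × R × R) : g d (secondChart d q) = 0 := by
  rw [g, ← secondChart_mul_snd, secondChart_fst]
  ring

theorem secondChart_ne_zero (d : ℕ) {q : R × R × R} (hq : q.2 ≠ 0) : secondChart d q ≠ 0 := by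
  intro h
  exact hq (Prod.ext (congrArg (fun p => p.2.1) h) (congrArg (fun p => p.2.2.2) h))

theorem secondChart_injOn [IsDomain R] (d : ℕ) :
    Set.InjOn (secondChart d) {q : R × R × R | q.2 ≠ 0} := by
  rintro ⟨t₁, y, v⟩ hq ⟨t₂, y₂, v₂⟩ - h
  obtain rfl : y = y₂ := congrArg (fun p => p.2.1) h
  obtain rfl : v = v₂ := congrArg (fun p => p.2.2.2) h
  suffices t₁ = t₂ by rw [this]
  by_cases hy : y = 0
  · have hv : v ≠ 0 := fun hv => hq (by simp [hy, hv])
    have hz : (secondChart d (t₁, y, v)).2.2.1 ≠ 0 := by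
      simpa [secondChart, hy] using pow_ne_zero d hv
    refine mul_right_cancel₀ hz ?_
    have h₁ := secondChart_fst d (t₁, y, v)
    have h₂ := secondChart_fst d (t₂, y, v)
    rw [h] at h₁ ⊢
    exact h₁.symm.trans h₂
  · refine mul_right_cancel₀ hy ?_
    have h₁ := secondChart_mul_snd d (t₁, y, v)
    have h₂ := secondChart_mul_snd d (t₂, y, v)
    rw [h] at h₁
    exact h₁.trans h₂.symm

end LinksOfSingularities

open LinksOfSingularities in
theorem links_of_singularities_stmt_4_general (d : ℕ)
    (Ψ' : ℂ × ℂ × ℂ → ℂ × ℂ × ℂ × ℂ)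
    (hΨ' : ∀ t' y v : ℂ, Ψ' (t', y, v) =
      (t' ^ 2 * y - t' * v ^ d, y, t' * y - v ^ d, v)) :
    (∀ t' y v : ℂ,
      (Ψ' (t', y, v)).1 * (Ψ' (t', y, v)).2.1 -
        (Ψ' (t', y, v)).2.2.1 *
          ((Ψ' (t', y, v)).2.2.1 + (Ψ' (t', y, v)).2.2.2 ^ d) = 0) ∧
    Set.InjOn Ψ' {q : ℂ × ℂ × ℂ | q.2 ≠ 0} ∧
    (∀ t' y v : ℂ, (y, v) ≠ ((0 : ℂ), (0 : ℂ)) → Ψ' (t', y, v) ≠ 0) := by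
  obtain rfl : Ψ' = secondChart d := funext fun ⟨t', y, v⟩ => hΨ' t' y v
  exact ⟨fun t' y v => g_secondChart d (t', y, v), secondChart_injOn d,
    fun t' y v => secondChart_ne_zero d (q := (t', y, v))⟩

/-- For every integer `d ≥ 1`, the second chart
`Ψ'(t',y,v) = (t'²y − t'·v^d, y, t'·y − v^d, v)` of the parametrization of
`Y_d \ {0}`:
(1) lands in `Y_d = {x·y − z·(z + v^d) = 0}`;
(2) is injective on `{(t',y,v) : (y,v) ≠ (0,0)}`;
(3) sends points with `(y,v) ≠ (0,0)` to nonzero points. -/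
theorem links_of_singularities_stmt_4 (d : ℕ) (hd : 1 ≤ d)
    (Ψ' : ℂ × ℂ × ℂ → ℂ × ℂ × ℂ × ℂ)
    (hΨ' : ∀ t' y v : ℂ, Ψ' (t', y, v) =
      (t' ^ 2 * y - t' * v ^ d, y, t' * y - v ^ d, v)) :
    (∀ t' y v : ℂ,
      (Ψ' (t', y, v)).1 * (Ψ' (t', y, v)).2.1 -
        (Ψ' (t', y, v)).2.2.1 *
          ((Ψ' (t', y, v)).2.2.1 + (Ψ' (t', y, v)).2.2.2 ^ d) = 0) ∧
    Set.InjOn Ψ' {q : ℂ × ℂ × ℂ | q.2 ≠ 0} ∧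
    (∀ t' y v : ℂ, (y, v) ≠ ((0 : ℂ), (0 : ℂ)) → Ψ' (t', y, v) ≠ 0) :=
  links_of_singularities_stmt_4_general d Ψ' hΨ'
end

section
/- For every integer d ≥ 1, the two charts cover the punctured hypersurface Y_d \ {0}: every point (x,y,z,v) ∈ ℂ⁴ with (x,y,z,v) ≠ 0 and x·y = z·(z + v^d) lies either in the image of Ψ restricted to {(t,x,v) : (x,v) ≠ (0,0)} or in the image of Ψ' restricted to {(t',y,v) : (y,v) ≠ (0,0)}. More precisely: if x ≠ 0 then (x,y,z,v) = Ψ(z/x, x, v); if y ≠ 0 then (x,y,z,v) = Ψ'((z + v^d)/y, y, v); and if x = y = 0 then v ≠ 0 and either z = 0 and the point equals Ψ(0,0,v), or z = −v^d and the point equals Ψ'(0,0,v). -/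
/-!
On `x·y = z·(z + w)` with `x ≠ 0`, the parameter `t = z/x` recovers the point from `Ψ`, since
`t²x + t·w = z(z + w)/x = y`; symmetrically `t' = (z + w)/y` works for `Ψ'` when `y ≠ 0`.
When `x = y = 0` the equation degenerates to `z(z + v^d) = 0`, and `v = 0` would force the point
to be `0`.
-/

section Field

variable {K : Type*} [Field K] {x y z w : K}

theorem sq_div_mul_add_div_mul_eq_of_mul_eq (hx : x ≠ 0) (h : x * y = z * (z + w)) :
    (z / x) ^ 2 * x + z / x * w = y := by
  field_simp
  linear_combination -h

theorem sq_div_mul_sub_div_mul_eq_of_mul_eq (hy : y ≠ 0) (h : x * y = z * (z + w)) :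
    ((z + w) / y) ^ 2 * y - (z + w) / y * w = x := by
  field_simp
  linear_combination -h

end Field

/-- For every integer `d ≥ 1`, the two charts
`Ψ(t,x,v) = (x, t²x + t·v^d, t·x, v)` and
`Ψ'(t',y,v) = (t'²y − t'·v^d, y, t'·y − v^d, v)`
cover the punctured hypersurface `Y_d \ {0}`: every nonzero point with
`x·y = z·(z + v^d)` is in the image of `Ψ` restricted to `{(x,v) ≠ (0,0)}` or
of `Ψ'` restricted to `{(y,v) ≠ (0,0)}`; more precisely, if `x ≠ 0` the point
is `Ψ(z/x, x, v)`, if `y ≠ 0` it is `Ψ'((z + v^d)/y, y, v)`, and if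
`x = y = 0` then `v ≠ 0` and either `z = 0` and the point is `Ψ(0,0,v)`, or
`z = −v^d` and the point is `Ψ'(0,0,v)`. -/
theorem links_of_singularities_stmt_5 (d : ℕ) (hd : 1 ≤ d)
    (Ψ Ψ' : ℂ × ℂ × ℂ → ℂ × ℂ × ℂ × ℂ)
    (hΨ : ∀ t x v : ℂ, Ψ (t, x, v) =
      (x, t ^ 2 * x + t * v ^ d, t * x, v))
    (hΨ' : ∀ t' y v : ℂ, Ψ' (t', y, v) =
      (t' ^ 2 * y - t' * v ^ d, y, t' * y - v ^ d, v))
    (x y z v : ℂ) (hp : ((x, y, z, v) : ℂ × ℂ × ℂ × ℂ) ≠ 0)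
    (heq : x * y = z * (z + v ^ d)) :
    ((∃ q : ℂ × ℂ × ℂ, q.2 ≠ 0 ∧ Ψ q = (x, y, z, v)) ∨
      (∃ q : ℂ × ℂ × ℂ, q.2 ≠ 0 ∧ Ψ' q = (x, y, z, v))) ∧
    (x ≠ 0 → ((x, y, z, v) : ℂ × ℂ × ℂ × ℂ) = Ψ (z / x, x, v)) ∧
    (y ≠ 0 → ((x, y, z, v) : ℂ × ℂ × ℂ × ℂ) = Ψ' ((z + v ^ d) / y, y, v)) ∧
    (x = 0 → y = 0 → v ≠ 0 ∧
      ((z = 0 ∧ ((x, y, z, v) : ℂ × ℂ × ℂ × ℂ) = Ψ (0, 0, v)) ∨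
        (z = -v ^ d ∧ ((x, y, z, v) : ℂ × ℂ × ℂ × ℂ) = Ψ' (0, 0, v)))) := by
  have hx (hx : x ≠ 0) : ((x, y, z, v) : ℂ × ℂ × ℂ × ℂ) = Ψ (z / x, x, v) := by
    rw [hΨ, sq_div_mul_add_div_mul_eq_of_mul_eq hx heq, div_mul_cancel₀ z hx]
  have hy (hy : y ≠ 0) : ((x, y, z, v) : ℂ × ℂ × ℂ × ℂ) = Ψ' ((z + v ^ d) / y, y, v) := by
    rw [hΨ', sq_div_mul_sub_div_mul_eq_of_mul_eq hy heq, div_mul_cancel₀ _ hy, add_sub_cancel_right]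
  have hxy : x = 0 → y = 0 → v ≠ 0 ∧
      ((z = 0 ∧ ((x, y, z, v) : ℂ × ℂ × ℂ × ℂ) = Ψ (0, 0, v)) ∨
        (z = -v ^ d ∧ ((x, y, z, v) : ℂ × ℂ × ℂ × ℂ) = Ψ' (0, 0, v))) := by
    rintro rfl rfl
    have hz : z = 0 ∨ z = -v ^ d := by
      rw [zero_mul, eq_comm, mul_eq_zero, add_eq_zero_iff_eq_neg] at heq
      exact heq
    have hv : v ≠ 0 := by
      rintro rfl
      rw [zero_pow (by omega), neg_zero, or_self] at hz
      exact hp (by simp [hz])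
    refine ⟨hv, hz.imp (fun hz ↦ ⟨hz, ?_⟩) (fun hz ↦ ⟨hz, ?_⟩)⟩
    · simp [hΨ, hz]
    · simp [hΨ', hz]
  refine ⟨?_, hx, hy, hxy⟩
  by_cases hx0 : x = 0
  · by_cases hy0 : y = 0
    · obtain ⟨hv, ⟨-, he⟩ | ⟨-, he⟩⟩ := hxy hx0 hy0
      · exact .inl ⟨(0, 0, v), by simp [hv], he.symm⟩
      · exact .inr ⟨(0, 0, v), by simp [hv], he.symm⟩
    · exact .inr ⟨_, by simp [hy0], (hy hy0).symm⟩
  · exact .inl ⟨_, by simp [hx0], (hx hx0).symm⟩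
end
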